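/- arXiv:1310.7994 — 4 statements merged into one kernel-verified Lean document; each statement's English description precedes it below -/
import Mathlib

section
/- Let A be a symmetric real K×K matrix that is diagonally dominant in the sense that A_{ii} − A_{ij} > 0 for all i ≠ j. Then A is simplicial, i.e., no row of A lies in the convex hull of the remaining rows (equivalently, every row is at some positive Euclidean distance from the convex hull of the remaining rows). -/
/-- A symmetric real `K × K` matrix that is diagonally dominant
in the sense that `A i i - A i j > 0` for all `i ≠ j` is simplicial: no row of
`A` lies in the convex hull of the remaining rows. -/
theorem diagDominant_symm_simplicial (K : ℕ) (A : Matrix (Fin K) (Fin K) ℝ)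
    (hsymm : A.IsSymm)
    (hdd : ∀ i j : Fin K, i ≠ j → 0 < A i i - A i j) :
    ∀ i : Fin K, (A i : Fin K → ℝ) ∉
      convexHull ℝ ((fun j => (A j : Fin K → ℝ)) '' {j | j ≠ i}) := by
  intro i hmem
  have hconv : Convex ℝ {x : Fin K → ℝ | x i < A i i} :=
    convex_halfSpace_lt (⟨fun a b => rfl, fun c a => rfl⟩ : IsLinearMap ℝ fun x : Fin K → ℝ => x i) _
  have hsub : ((fun j => (A j : Fin K → ℝ)) '' {j | j ≠ i}) ⊆ {x : Fin K → ℝ | x i < A i i} := by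
    rintro x ⟨j, hj, rfl⟩
    have h1 : A j i = A i j := by
      have := congrFun (congrFun hsymm i) j
      simpa [Matrix.transpose_apply] using this
    have := hdd i j (Ne.symm hj)
    simp only [Set.mem_setOf_eq, h1]
    linarith
  have := convexHull_min hsub hconv hmem
  simp at this
end

section
/- Let W > K ≥ 2, let a ∈ ℝ^K be entrywise positive, let c₂, …, c_K ≥ 0 with Σ_{j=2}^K c_j = 1, and set e = (−1, c₂, …, c_K). Fix 0 < α < 1 and b > 0, and define b₁ = b·(a₁^{−1}, 0, …, 0) and b₂ = b·((1−α)a₁^{−1}, α c₂ a₂^{−1}, …, α c_K a_K^{−1}). Assume b is small enough that every entry of b₁ + b₂ is strictly less than 1, and let B be any (W−2)×K column-stochastic separable matrix. Define β₁ as the W×K matrix whose first row is b₁, second row is b₂, and remaining W−2 rows are B(I_K − diag(b₁+b₂)); define β₂ identically except its first row is b₂ and its second row is b₁. Then: (a) β₁ and β₂ are both column-stochastic (nonnegative with each column summing to 1); (b) both β₁ and β₂ are separable; (c) word 1 is a novel word of β₁ but word 1 is not a novel word of β₂ (the row b₂ has at least two nonzero entries); and (d) for every θ ∈ ℝ^K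 with eᵀ diag(a)^{−1} θ = 0, one has β₁ θ = β₂ θ. -/
def Matrix.ColStochastic {m n : ℕ} (B : Matrix (Fin m) (Fin n) ℝ) : Prop :=
  (∀ i j, 0 ≤ B i j) ∧ ∀ j, ∑ i, B i j = 1

def Matrix.NovelWord {W K : ℕ} (β : Matrix (Fin W) (Fin K) ℝ)
    (i : Fin W) (k : Fin K) : Prop :=
  0 < β i k ∧ ∀ l : Fin K, l ≠ k → β i l = 0

def Matrix.Separable {W K : ℕ} (β : Matrix (Fin W) (Fin K) ℝ) : Prop :=
  ∀ k : Fin K, ∃ i : Fin W, β.NovelWord i k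

lemma prod_entry {w K : ℕ} (B : Matrix (Fin w) (Fin K) ℝ) (s : Fin K → ℝ) (i : Fin w) (j : Fin K) :
    (B * ((1 : Matrix (Fin K) (Fin K) ℝ) - Matrix.diagonal s)) i j = B i j * (1 - s j) := by
  simp [Matrix.mul_sub, Matrix.mul_one, Matrix.sub_apply, Matrix.mul_diagonal]
  ring

lemma aux_cs {w K : ℕ} (x y : Fin K → ℝ) (hx : ∀ j, 0 ≤ x j) (hy : ∀ j, 0 ≤ y j)
    (hlt : ∀ j, x j + y j < 1)
    (B : Matrix (Fin w) (Fin K) ℝ) (hBcs : B.ColStochastic) :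
    (Matrix.of (Fin.cons x (Fin.cons y
      (fun (i : Fin w) (j : Fin K) =>
      (B * ((1 : Matrix (Fin K) (Fin K) ℝ) - Matrix.diagonal (x + y))) i j))) :
      Matrix (Fin (w+2)) (Fin K) ℝ).ColStochastic := by
  constructor
  · intro i j
    refine Fin.cases ?_ (fun i => ?_) i
    · simpa using hx j
    · refine Fin.cases ?_ (fun i => ?_) i
      · simpa using hy j
      · simp only [Matrix.of_apply, Fin.cons_succ, prod_entry]
        have h1 : 0 ≤ 1 - (x j + y j) := by
          have := hlt j; nlinarith [hx j, hy j]
        exact mul_nonneg (hBcs.1 i j) (by simpa using h1)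
  · intro j
    rw [Fin.sum_univ_succ, Fin.sum_univ_succ]
    simp only [Matrix.of_apply, Fin.cons_zero, Fin.cons_succ, prod_entry]
    have : ∑ i : Fin w, B i j * (1 - (x + y) j) = (1 - (x j + y j)) := by
      rw [← Finset.sum_mul, hBcs.2 j]; simp
    rw [this]; ring

lemma aux_sep {w K : ℕ} (x y : Fin K → ℝ)
    (hlt : ∀ j, x j + y j < 1)
    (B : Matrix (Fin w) (Fin K) ℝ) (hBsep : B.Separable) :
    (Matrix.of (Fin.cons x (Fin.cons y
      (fun (i : Fin w) (j : Fin K) =>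
      (B * ((1 : Matrix (Fin K) (Fin K) ℝ) - Matrix.diagonal (x + y))) i j))) :
      Matrix (Fin (w+2)) (Fin K) ℝ).Separable := by
  intro k
  obtain ⟨i, hpos, hzero⟩ := hBsep k
  refine ⟨i.succ.succ, ?_, ?_⟩
  · simp only [Matrix.of_apply, Fin.cons_succ, prod_entry]
    have := hlt k
    exact mul_pos hpos (by simp; linarith)
  · intro l hl
    simp only [Matrix.of_apply, Fin.cons_succ, prod_entry, hzero l hl, zero_mul]

/-- Construction of two column-stochastic separable topic
matrices (here `W = w + 2 > K ≥ 2`): `β₁` has rows `b₁, b₂, B(I_K - diag(b₁+b₂))`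
and `β₂` has rows `b₂, b₁, B(I_K - diag(b₁+b₂))`, where `B` is any `(W-2) × K`
column-stochastic separable matrix and every entry of `b₁ + b₂` is `< 1`.
Then both are column-stochastic and separable, word `1` (index `0`) is novel
for `β₁` but not for `β₂`, and `β₁ θ = β₂ θ` for every `θ` with
`eᵀ diag(a)⁻¹ θ = 0`. -/
theorem construction_of_indistinguishable_separable_models
    (w K : ℕ) (hK : 2 ≤ K) (hWK : K < w + 2)
    (a : Fin K → ℝ) (ha : ∀ j, 0 < a j)
    (c : Fin K → ℝ) (hc : ∀ j : Fin K, (j : ℕ) ≠ 0 → 0 ≤ c j)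
    (hcsum : ∑ j ∈ Finset.univ.filter (fun j : Fin K => (j : ℕ) ≠ 0), c j = 1)
    (b α : ℝ) (hb : 0 < b) (hα₀ : 0 < α) (hα₁ : α < 1)
    (e b₁ b₂ : Fin K → ℝ)
    (he : ∀ j, e j = if (j : ℕ) = 0 then -1 else c j)
    (hb₁ : ∀ j, b₁ j = if (j : ℕ) = 0 then b * (a j)⁻¹ else 0)
    (hb₂ : ∀ j, b₂ j = if (j : ℕ) = 0 then b * ((1 - α) * (a j)⁻¹)
      else b * (α * c j * (a j)⁻¹))
    (hsmall : ∀ j, b₁ j + b₂ j < 1)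
    (B : Matrix (Fin w) (Fin K) ℝ) (hBcs : B.ColStochastic) (hBsep : B.Separable)
    (β₁ β₂ : Matrix (Fin (w + 2)) (Fin K) ℝ)
    (hβ₁ : β₁ = Matrix.of (Fin.cons b₁ (Fin.cons b₂
      (fun (i : Fin w) (j : Fin K) =>
      (B * ((1 : Matrix (Fin K) (Fin K) ℝ) - Matrix.diagonal (b₁ + b₂))) i j))))
    (hβ₂ : β₂ = Matrix.of (Fin.cons b₂ (Fin.cons b₁
      (fun (i : Fin w) (j : Fin K) =>
      (B * ((1 : Matrix (Fin K) (Fin K) ℝ) - Matrix.diagonal (b₁ + b₂))) i j)))) :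
    β₁.ColStochastic ∧ β₂.ColStochastic ∧
    β₁.Separable ∧ β₂.Separable ∧
    (∃ k : Fin K, β₁.NovelWord 0 k) ∧ (∀ k : Fin K, ¬ β₂.NovelWord 0 k) ∧
    ∀ θ : Fin K → ℝ, (∑ j, e j * θ j / a j = 0) →
      β₁.mulVec θ = β₂.mulVec θ := by
  have hb₁nn : ∀ j, 0 ≤ b₁ j := by
    intro j; rw [hb₁]; split_ifs
    · exact (mul_pos hb (inv_pos.2 (ha j))).le
    · exact le_refl 0
  have hb₂nn : ∀ j, 0 ≤ b₂ j := by
    intro j; rw [hb₂]; split_ifs with h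
    · have : 0 < (a j)⁻¹ := inv_pos.2 (ha j)
      have h1α : 0 < 1 - α := by linarith
      exact (mul_pos hb (mul_pos h1α this)).le
    · have hcj := hc j h
      have : 0 < (a j)⁻¹ := inv_pos.2 (ha j)
      exact mul_nonneg hb.le (mul_nonneg (mul_nonneg hα₀.le hcj) this.le)
  have hsmall' : ∀ j, b₂ j + b₁ j < 1 := fun j => by have := hsmall j; linarith
  have hcomm : b₁ + b₂ = b₂ + b₁ := add_comm _ _
  have cs₁ : β₁.ColStochastic := by
    rw [hβ₁]; exact aux_cs b₁ b₂ hb₁nn hb₂nn hsmall B hBcs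
  have cs₂ : β₂.ColStochastic := by
    rw [hβ₂, hcomm]; exact aux_cs b₂ b₁ hb₂nn hb₁nn hsmall' B hBcs
  have sep₁ : β₁.Separable := by
    rw [hβ₁]; exact aux_sep b₁ b₂ hsmall B hBsep
  have sep₂ : β₂.Separable := by
    rw [hβ₂, hcomm]; exact aux_sep b₂ b₁ hsmall' B hBsep
  have hK0 : 0 < K := by omega
  set k0 : Fin K := ⟨0, hK0⟩ with hk0
  -- existence of a nonzero-index topic with positive c
  obtain ⟨j₀, hj₀mem, hj₀ne⟩ :=
    Finset.exists_ne_zero_of_sum_ne_zero (by rw [hcsum]; norm_num :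
      ∑ j ∈ Finset.univ.filter (fun j : Fin K => (j : ℕ) ≠ 0), c j ≠ 0)
  have hj₀ : (j₀ : ℕ) ≠ 0 := (Finset.mem_filter.1 hj₀mem).2
  have hcj₀ : 0 < c j₀ := lt_of_le_of_ne (hc j₀ hj₀) (Ne.symm hj₀ne)
  have hb₂k0 : 0 < b₂ k0 := by
    rw [hb₂, if_pos (show ((k0 : ℕ)) = 0 from rfl)]
    have : 0 < (a k0)⁻¹ := inv_pos.2 (ha k0)
    have h1α : 0 < 1 - α := by linarith
    exact mul_pos hb (mul_pos h1α this)
  have hb₂j₀ : 0 < b₂ j₀ := by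
    rw [hb₂, if_neg hj₀]
    exact mul_pos hb (mul_pos (mul_pos hα₀ hcj₀) (inv_pos.2 (ha j₀)))
  have hnov₁ : ∃ k : Fin K, β₁.NovelWord 0 k := by
    refine ⟨k0, ?_, ?_⟩
    · rw [hβ₁]
      simp only [Matrix.of_apply, Fin.cons_zero]
      rw [hb₁, if_pos rfl]
      exact mul_pos hb (inv_pos.2 (ha k0))
    · intro l hl
      rw [hβ₁]
      simp only [Matrix.of_apply, Fin.cons_zero]
      rw [hb₁, if_neg]
      intro h
      exact hl (Fin.ext h)
  have hnotnov₂ : ∀ k : Fin K, ¬ β₂.NovelWord 0 k := by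
    intro k hk
    obtain ⟨hpos, hzero⟩ := hk
    have hrow : ∀ j, β₂ 0 j = b₂ j := by
      intro j; rw [hβ₂]; simp
    by_cases hkk : k = k0
    · have hne : j₀ ≠ k := by
        intro h; apply hj₀; rw [h, hkk]
      have := hzero j₀ hne
      rw [hrow] at this
      exact absurd this (ne_of_gt hb₂j₀)
    · have hne : k0 ≠ k := fun h => hkk h.symm
      have := hzero k0 hne
      rw [hrow] at this
      exact absurd this (ne_of_gt hb₂k0)
  refine ⟨cs₁, cs₂, sep₁, sep₂, hnov₁, hnotnov₂, ?_⟩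
  intro θ hθ
  have key : ∀ j, b₁ j * θ j - b₂ j * θ j = -(b*α) * (e j * θ j / a j) := by
    intro j
    have haj : a j ≠ 0 := (ha j).ne'
    rw [hb₁, hb₂, he]
    split_ifs <;> · rw [div_eq_mul_inv]; ring
  have h0 : ∑ j, (b₁ j * θ j - b₂ j * θ j) = 0 := by
    calc ∑ j, (b₁ j * θ j - b₂ j * θ j)
        = ∑ j, -(b*α) * (e j * θ j / a j) := Finset.sum_congr rfl fun j _ => key j
      _ = -(b*α) * ∑ j, e j * θ j / a j := by rw [Finset.mul_sum]
      _ = 0 := by rw [hθ]; ring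
  have hdot : ∑ j, b₁ j * θ j = ∑ j, b₂ j * θ j := by
    rw [Finset.sum_sub_distrib] at h0; linarith
  funext i
  rw [hβ₁, hβ₂]
  refine Fin.cases ?_ (fun i => ?_) i
  · simpa [Matrix.mulVec, dotProduct] using hdot
  · refine Fin.cases ?_ (fun i => ?_) i
    · simpa [Matrix.mulVec, dotProduct] using hdot.symm
    · simp [Matrix.mulVec, dotProduct]
end

section
/- (Simplicial condition is necessary.) Let W > K ≥ 2 and let θ : Ω → ℝ^K be a measurable, square-integrable random vector with entrywise positive mean a = E[θ] and second-moment matrix R = E[θ θᵀ]. Define the normalized correlation matrix R′ = diag(a)^{−1} R diag(a)^{−1}. If R′ is not simplicial, i.e., some row of R′ lies in the convex hull of the remaining rows of R′, then there exist two W×K column-stochastic separable matrices β₁ and β₂ whose sets of novel words are not identical (in particular, some word is novel for β₁ but not for β₂), such that β₁ θ = β₂ θ almost surely. Consequently, the distribution of any observation generated from document word-distributions β θ is the same under both topic matrices, so no algorithm can consistently identify all novel words of all topics when R′ is not simplicial. -/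
open MeasureTheory

/-!
If row `i` of `R'` is a convex combination `∑ c_j R'_j` of the other rows, undoing the
normalisation gives `R_i = ∑ e_j R_j` with `e_j = c_j a_i / a_j ≥ 0`. Hence
`Y = θ_i - ∑ e_j θ_j` has `E[Y²] = 0`, i.e. `θ_i = ∑ e_j θ_j` almost surely, and adding the
rank-one matrix `t (δ_p - δ_{w_i}) (δ_i - e)ᵀ` to a topic matrix does not change `β θ`. Starting
from a separable `β₁` in which every topic `j` leaks mass `t e_j` to a spare word `p`, this
perturbation makes `p` the novel word of topic `i`, while the old novel word `w_i` of topic `i`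
receives mass from a topic `j₀` with `e_{j₀} > 0` and is no longer novel.
-/

open Matrix

section ConvexHull

variable {𝕜 E ι : Type*} [Field 𝕜] [LinearOrder 𝕜] [IsStrictOrderedRing 𝕜] [AddCommGroup E]
  [Module 𝕜 E] [Fintype ι]

theorem exists_weights_of_mem_convexHull_image {f : ι → E} {s : Set ι} {x : E}
    (hx : x ∈ convexHull 𝕜 (f '' s)) :
    ∃ c : ι → 𝕜, (∀ j, 0 ≤ c j) ∧ (∀ j ∉ s, c j = 0) ∧ ∑ j, c j = 1 ∧ ∑ j, c j • f j = x := by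
  classical
  obtain ⟨κ, _, w, z, hw₀, hw₁, hz, rfl⟩ := mem_convexHull_iff_exists_fintype.mp hx
  choose g hgs hgz using hz
  refine ⟨fun j => ∑ m with g m = j, w m, fun j => Finset.sum_nonneg fun m _ => hw₀ m,
    fun j hj => Finset.sum_eq_zero fun m hm => ?_, ?_, ?_⟩
  · exact absurd ((Finset.mem_filter.mp hm).2 ▸ hgs m) hj
  · rwa [Finset.sum_fiberwise Finset.univ g w]
  · simp_rw [Finset.sum_smul, ← hgz]
    rw [← Finset.sum_fiberwise Finset.univ g fun m => w m • f (g m)]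
    exact Finset.sum_congr rfl fun j _ => Finset.sum_congr rfl fun m hm => by
      rw [(Finset.mem_filter.mp hm).2]

end ConvexHull

section SecondMoment

variable {Ω ι : Type*} [MeasurableSpace Ω] {μ : Measure Ω} [Fintype ι] {θ : Ω → ι → ℝ}
  {R : Matrix ι ι ℝ}

theorem integral_dotProduct_sq (hθ : ∀ i, MemLp (fun ω => θ ω i) 2 μ)
    (hR : ∀ i j, R i j = ∫ ω, θ ω i * θ ω j ∂μ) (v : ι → ℝ) :
    ∫ ω, (v ⬝ᵥ θ ω) ^ 2 ∂μ = v ⬝ᵥ (R *ᵥ v) := by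
  have hint : ∀ i j, Integrable (fun ω => v i * v j * (θ ω i * θ ω j)) μ := fun i j =>
    ((hθ i).integrable_mul (hθ j)).const_mul _
  have hsq : ∀ ω, (v ⬝ᵥ θ ω) ^ 2 = ∑ i, ∑ j, v i * v j * (θ ω i * θ ω j) := fun ω => by
    simp only [sq, dotProduct, Finset.sum_mul_sum]
    exact Finset.sum_congr rfl fun i _ => Finset.sum_congr rfl fun j _ => by ring
  simp_rw [hsq]
  rw [integral_finsetSum _ fun i _ => integrable_finsetSum _ fun j _ => hint i j]
  simp only [dotProduct, mulVec, Finset.mul_sum]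
  refine Finset.sum_congr rfl fun i _ => ?_
  rw [integral_finsetSum _ fun j _ => hint i j]
  refine Finset.sum_congr rfl fun j _ => ?_
  rw [integral_const_mul, hR]
  ring

theorem ae_dotProduct_eq_zero_of_vecMul_eq_zero (hθ : ∀ i, MemLp (fun ω => θ ω i) 2 μ)
    (hR : ∀ i j, R i j = ∫ ω, θ ω i * θ ω j ∂μ) {v : ι → ℝ} (hv : v ᵥ* R = 0) :
    ∀ᵐ ω ∂μ, v ⬝ᵥ θ ω = 0 := by
  have hmem : MemLp (fun ω => v ⬝ᵥ θ ω) 2 μ :=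
    memLp_finsetSum _ fun i _ => (hθ i).const_mul (v i)
  have hzero : ∫ ω, (v ⬝ᵥ θ ω) ^ 2 ∂μ = 0 := by
    rw [integral_dotProduct_sq hθ hR, dotProduct_mulVec, hv, zero_dotProduct]
  filter_upwards [(integral_eq_zero_iff_of_nonneg (fun ω => sq_nonneg _) hmem.integrable_sq).mp
    hzero] with ω hω
  exact pow_eq_zero_iff two_ne_zero |>.mp hω

end SecondMoment

theorem vecMul_eq_zero_of_sum_smul_row_eq {𝕜 ι : Type*} [Field 𝕜] [Fintype ι] [DecidableEq ι]
    {a : ι → 𝕜} (ha : ∀ j, a j ≠ 0) {R R' : Matrix ι ι 𝕜}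
    (hR' : ∀ i j, R' i j = R i j / (a i * a j)) {c : ι → 𝕜} {i : ι}
    (hc : ∑ j, c j • R' j = R' i) :
    (Pi.single i 1 - fun j => c j * a i / a j) ᵥ* R = 0 := by
  ext l
  have hl := congrFun hc l
  simp only [Finset.sum_apply, Pi.smul_apply, smul_eq_mul, hR'] at hl
  rw [sub_vecMul, single_one_vecMul, Pi.sub_apply, Pi.zero_apply, sub_eq_zero]
  calc R i l = a i * a l * (R i l / (a i * a l)) := by field_simp [ha i, ha l]
    _ = ∑ j, c j * a i / a j * R j l := by
      rw [← hl, Finset.mul_sum]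
      exact Finset.sum_congr rfl fun j _ => by field_simp [ha j, ha l]

theorem Matrix.not_novelWord_of_pos_of_pos {W K : ℕ} {β : Matrix (Fin W) (Fin K) ℝ} {r : Fin W}
    {k₁ k₂ : Fin K} (hk : k₁ ≠ k₂) (h₁ : 0 < β r k₁) (h₂ : 0 < β r k₂) (k : Fin K) :
    ¬ β.NovelWord r k := by
  rintro ⟨-, hzero⟩
  by_cases h : k₁ = k
  · exact h₂.ne' (hzero k₂ (h ▸ hk.symm))
  · exact h₁.ne' (hzero k₁ h)

section MixMatrix

variable {W K : ℕ} (emb : Fin K ↪ Fin W)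

def mixMatrix (s : Fin K → ℝ) (w : Fin K → Fin W) : Matrix (Fin W) (Fin K) ℝ :=
  Matrix.of fun r j => ((1 - s j) • Pi.single (emb j) 1 + s j • Pi.single (w j) 1 : Fin W → ℝ) r

variable {emb} {s : Fin K → ℝ} {w : Fin K → Fin W}

theorem colStochastic_mixMatrix (hs₀ : ∀ j, 0 ≤ s j) (hs₁ : ∀ j, s j ≤ 1) :
    (mixMatrix emb s w).ColStochastic := by
  refine ⟨fun r j => ?_, fun j => ?_⟩
  · have := hs₀ j; have := hs₁ j
    simp only [mixMatrix, of_apply, Pi.add_apply, Pi.smul_apply, Pi.single_apply, smul_eq_mul]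
    split_ifs <;> linarith
  · simp [mixMatrix, Finset.sum_add_distrib, ← Finset.mul_sum]

theorem novelWord_mixMatrix_emb {k : Fin K} (hk : s k < 1) (hw : ∀ l, w l ≠ emb k) :
    (mixMatrix emb s w).NovelWord (emb k) k := by
  have hw' : ∀ l, emb k ≠ w l := fun l => (hw l).symm
  refine ⟨?_, fun l hl => ?_⟩
  · simpa [mixMatrix, Pi.single_apply, hw'] using hk
  · simp [mixMatrix, Pi.single_apply, hw', emb.injective.eq_iff, hl.symm]

theorem novelWord_mixMatrix_of_notMem_range {r : Fin W} {k : Fin K} (hr : ∀ j, emb j ≠ r)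
    (hk : 0 < s k) (hwk : w k = r) (hw : ∀ l ≠ k, w l ≠ r) :
    (mixMatrix emb s w).NovelWord r k := by
  refine ⟨?_, fun l hl => ?_⟩
  · simpa [mixMatrix, Pi.single_apply, hwk, (hr k).symm] using hk
  · simp [mixMatrix, Pi.single_apply, (hr l).symm, (hw l hl).symm]

theorem mixMatrix_update_eq_add_vecMulVec {e : Fin K → ℝ} {i : Fin K} (hei : e i = 0)
    (t : ℝ) (p : Fin W) :
    mixMatrix emb (Function.update (t • e) i t) (Function.update (fun _ => emb i) i p) =
      mixMatrix emb (t • e) (fun _ => p) +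
        t • vecMulVec (Pi.single p 1 - Pi.single (emb i) 1) (Pi.single i 1 - e) := by
  ext r j
  simp only [mixMatrix, vecMulVec, of_apply, Matrix.add_apply, smul_of, Pi.add_apply, Pi.sub_apply,
    Pi.smul_apply, Pi.single_apply, smul_eq_mul]
  by_cases hj : j = i
  · subst hj
    simp only [Function.update_self, hei, ↓reduceIte]
    split_ifs <;> ring
  · simp only [Function.update_of_ne hj, Pi.smul_apply, smul_eq_mul, hj, ↓reduceIte]
    split_ifs <;> ring

end MixMatrix

theorem exists_separable_pair_mulVec_eq_of_dotProduct_eq_zero {W K : ℕ} (hWK : K < W)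
    {e : Fin K → ℝ} {i j₀ : Fin K} (he : ∀ j, 0 ≤ e j) (hei : e i = 0) (hj₀ : 0 < e j₀) :
    ∃ β₁ β₂ : Matrix (Fin W) (Fin K) ℝ,
      β₁.ColStochastic ∧ β₂.ColStochastic ∧ β₁.Separable ∧ β₂.Separable ∧
      (∃ r : Fin W, (∃ k, β₁.NovelWord r k) ∧ ∀ k, ¬ β₂.NovelWord r k) ∧
      ∀ x, (Pi.single i 1 - e) ⬝ᵥ x = 0 → β₁ *ᵥ x = β₂ *ᵥ x := by
  obtain ⟨t, ht₀, ht⟩ := exists_pos_mul_lt one_pos (1 + ∑ j, e j)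
  have hsum : 0 ≤ ∑ j, e j := Finset.sum_nonneg fun j _ => he j
  have ht₁ : t < 1 := by nlinarith
  have hte : ∀ j, t * e j < 1 := fun j => by
    nlinarith [Finset.single_le_sum (fun j _ => he j) (Finset.mem_univ j)]
  have hj₀i : j₀ ≠ i := fun h => hj₀.ne' (h ▸ hei)
  let emb : Fin K ↪ Fin W := Fin.castLEEmb hWK.le
  let p : Fin W := ⟨K, hWK⟩
  have hp : ∀ j, emb j ≠ p := fun j h => j.isLt.ne (congrArg Fin.val h)
  set β₁ := mixMatrix emb (t • e) fun _ => p
  set β₂ := mixMatrix emb (Function.update (t • e) i t) (Function.update (fun _ => emb i) i p)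
  have hs₀ : ∀ j, 0 ≤ (t • e) j := fun j => mul_nonneg ht₀.le (he j)
  have hs₁ : ∀ j, (t • e) j ≤ 1 := fun j => (hte j).le
  refine ⟨β₁, β₂, colStochastic_mixMatrix hs₀ hs₁, colStochastic_mixMatrix ?_ ?_,
    fun k => ⟨emb k, novelWord_mixMatrix_emb (hte k) fun _ => (hp k).symm⟩, fun k => ?_,
    ⟨emb i, ⟨i, novelWord_mixMatrix_emb (hte i) fun _ => (hp i).symm⟩, ?_⟩, fun x hx => ?_⟩
  · exact Function.forall_update_iff _ (fun _ x => 0 ≤ x) |>.mpr ⟨ht₀.le, fun j _ => hs₀ j⟩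
  · exact Function.forall_update_iff _ (fun _ x => x ≤ 1) |>.mpr ⟨ht₁.le, fun j _ => hs₁ j⟩
  · by_cases hk : k = i
    · subst hk
      exact ⟨p, novelWord_mixMatrix_of_notMem_range hp (by simpa using ht₀) (by simp)
        fun l hl => by simpa [hl] using hp k⟩
    · refine ⟨emb k, novelWord_mixMatrix_emb (by simpa [hk] using hte k) fun l => ?_⟩
      by_cases hl : l = i
      · simpa [hl] using (hp k).symm
      · simpa [hl] using fun h => hk (emb.injective h).symm
  · refine Matrix.not_novelWord_of_pos_of_pos hj₀i (k₂ := i) ?_ ?_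
    · simpa [β₂, mixMatrix, Pi.single_apply, Function.update_of_ne hj₀i, hj₀i.symm,
        emb.injective.eq_iff] using mul_pos ht₀ hj₀
    · simpa [β₂, mixMatrix, Pi.single_apply, hp] using ht₁
  · rw [show β₂ = _ from mixMatrix_update_eq_add_vecMulVec hei t p, add_mulVec, smul_mulVec,
      vecMulVec_mulVec, hx]
    simp [β₁]

theorem simplicial_condition_necessary_general
    {Ω : Type*} [MeasurableSpace Ω] (μ : Measure Ω)
    (W K : ℕ) (hWK : K < W)
    (θ : Ω → Fin K → ℝ)
    (hL2 : ∀ i : Fin K, MemLp (fun ω => θ ω i) 2 μ)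
    (a : Fin K → ℝ) (ha_pos : ∀ i, 0 < a i)
    (R R' : Matrix (Fin K) (Fin K) ℝ)
    (hR : ∀ i j, R i j = ∫ ω, θ ω i * θ ω j ∂μ)
    (hR' : ∀ i j, R' i j = R i j / (a i * a j))
    (hnotsimplicial : ∃ i : Fin K,
      (R' i : Fin K → ℝ) ∈ convexHull ℝ ((fun j => (R' j : Fin K → ℝ)) '' {j | j ≠ i})) :
    ∃ β₁ β₂ : Matrix (Fin W) (Fin K) ℝ,
      β₁.ColStochastic ∧ β₂.ColStochastic ∧
      β₁.Separable ∧ β₂.Separable ∧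
      (∃ i : Fin W, (∃ k, β₁.NovelWord i k) ∧ ∀ k, ¬ β₂.NovelWord i k) ∧
      ∀ᵐ ω ∂μ, β₁.mulVec (θ ω) = β₂.mulVec (θ ω) := by
  obtain ⟨i, hi⟩ := hnotsimplicial
  obtain ⟨c, hc₀, hci, hc₁, hc⟩ := exists_weights_of_mem_convexHull_image hi
  obtain ⟨j₀, hj₀⟩ : ∃ j₀, 0 < c j₀ := by
    by_contra! h
    linarith [Finset.sum_nonpos fun j (_ : j ∈ Finset.univ) => h j]
  have hv := vecMul_eq_zero_of_sum_smul_row_eq (fun j => (ha_pos j).ne') hR' hc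
  obtain ⟨β₁, β₂, hst₁, hst₂, hsep₁, hsep₂, hnovel, hker⟩ :=
    exists_separable_pair_mulVec_eq_of_dotProduct_eq_zero hWK (i := i) (j₀ := j₀)
      (fun j => div_nonneg (mul_nonneg (hc₀ j) (ha_pos i).le) (ha_pos j).le)
      (by simp [hci i (by simp)]) (by have := ha_pos i; have := ha_pos j₀; positivity)
  refine ⟨β₁, β₂, hst₁, hst₂, hsep₁, hsep₂, hnovel, ?_⟩
  filter_upwards [ae_dotProduct_eq_zero_of_vecMul_eq_zero hL2 hR hv] with ω hω
  exact hker _ hω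

/-- **the simplicial condition is necessary.**  Let `W > K ≥ 2`,
let `θ` be a measurable square-integrable random vector in `ℝ^K` with entrywise
positive mean `a` and second-moment matrix `R`, and let
`R' = diag(a)⁻¹ R diag(a)⁻¹`.  If `R'` is not simplicial, i.e. some row of `R'`
lies in the convex hull of the remaining rows, then there exist two
column-stochastic separable `W × K` matrices `β₁, β₂` whose novel-word sets
differ (some word is novel for `β₁` but not for `β₂`) and with
`β₁ θ = β₂ θ` almost surely — so the observations have the same distribution
under both topic matrices, and no algorithm can consistently identify all
novel words of all topics. -/
theorem simplicial_condition_necessary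
    {Ω : Type*} [MeasurableSpace Ω] (μ : Measure Ω) [IsProbabilityMeasure μ]
    (W K : ℕ) (hK : 2 ≤ K) (hWK : K < W)
    (θ : Ω → Fin K → ℝ)
    (hmeas : Measurable θ)
    (hL2 : ∀ i : Fin K, MemLp (fun ω => θ ω i) 2 μ)
    (a : Fin K → ℝ) (ha_def : ∀ i, a i = ∫ ω, θ ω i ∂μ) (ha_pos : ∀ i, 0 < a i)
    (R R' : Matrix (Fin K) (Fin K) ℝ)
    (hR : ∀ i j, R i j = ∫ ω, θ ω i * θ ω j ∂μ)
    (hR' : ∀ i j, R' i j = R i j / (a i * a j))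
    (hnotsimplicial : ∃ i : Fin K,
      (R' i : Fin K → ℝ) ∈ convexHull ℝ ((fun j => (R' j : Fin K → ℝ)) '' {j | j ≠ i})) :
    ∃ β₁ β₂ : Matrix (Fin W) (Fin K) ℝ,
      β₁.ColStochastic ∧ β₂.ColStochastic ∧
      β₁.Separable ∧ β₂.Separable ∧
      (∃ i : Fin W, (∃ k, β₁.NovelWord i k) ∧ ∀ k, ¬ β₂.NovelWord i k) ∧
      ∀ᵐ ω ∂μ, β₁.mulVec (θ ω) = β₂.mulVec (θ ω) :=
  simplicial_condition_necessary_general μ W K hWK θ hL2 a ha_pos R R' hR hR' hnotsimplicial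
end

section
/- Let p ∈ ℝ^n and let S ⊂ ℝ^n be a finite set with p ∉ conv(S). Suppose q₁, …, q_m ∈ ℝ^n are points of the form q_j = λ_j p + (1 − λ_j) s_j with λ_j ∈ [0, 1) and s_j ∈ conv(S) for each j. Then p ∉ conv({q₁, …, q_m}). -/
/-- If `p ∉ conv(S)` for a finite set `S ⊂ ℝ^n`, and
`q_j = λ_j p + (1 - λ_j) s_j` with `λ_j ∈ [0, 1)` and `s_j ∈ conv(S)`, then
`p ∉ conv({q₁, …, q_m})`. -/
theorem not_mem_convexHull_of_combinations (n m : ℕ)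
    (p : EuclideanSpace ℝ (Fin n)) (S : Set (EuclideanSpace ℝ (Fin n)))
    (hSfin : S.Finite) (hp : p ∉ convexHull ℝ S)
    (q s : Fin m → EuclideanSpace ℝ (Fin n)) (lam : Fin m → ℝ)
    (hlam : ∀ j, 0 ≤ lam j ∧ lam j < 1)
    (hs : ∀ j, s j ∈ convexHull ℝ S)
    (hq : ∀ j, q j = lam j • p + (1 - lam j) • s j) :
    p ∉ convexHull ℝ (Set.range q) := by
  intro hmem
  rw [mem_convexHull_iff_exists_fintype] at hmem
  obtain ⟨ι, _inst, w, z, hw0, hw1, hz, hsum⟩ := hmem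
  choose f hf using hz
  -- total weight on p
  set t : ℝ := ∑ i, w i * lam (f i) with ht
  have hterm_le : ∀ i ∈ Finset.univ, w i * lam (f i) ≤ w i := fun i _ =>
    mul_le_of_le_one_right (hw0 i) (hlam (f i)).2.le
  have hex : ∃ i ∈ Finset.univ, (0:ℝ) < w i := by
    by_contra h
    push_neg at h
    have : ∑ i, w i = 0 := Finset.sum_eq_zero fun i hi =>
      le_antisymm (h i hi) (hw0 i)
    rw [hw1] at this; norm_num at this
  obtain ⟨i0, hi0, hwi0⟩ := hex
  have ht_lt : t < 1 := by
    calc t < ∑ i, w i := by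
            apply Finset.sum_lt_sum hterm_le
            exact ⟨i0, hi0, by nlinarith [(hlam (f i0)).2, (hlam (f i0)).1]⟩
      _ = 1 := hw1
  -- rewrite p
  have hps : ∑ i, w i • z i = t • p + ∑ i, (w i * (1 - lam (f i))) • s (f i) := by
    rw [Finset.sum_smul, ← Finset.sum_add_distrib]
    apply Finset.sum_congr rfl
    intro i _
    rw [← hf i, hq (f i), smul_add, smul_smul, smul_smul]
  have key : (1 - t) • p = ∑ i, (w i * (1 - lam (f i))) • s (f i) := by
    have := hsum
    rw [hps] at this
    have h2 : p - t • p = ∑ i, (w i * (1 - lam (f i))) • s (f i) := by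
      rw [sub_eq_iff_eq_add']
      exact this.symm
    rw [sub_smul, one_smul]
    exact h2
  have hwsum : ∑ i, w i * (1 - lam (f i)) = 1 - t := by
    have h3 : ∑ i, w i * (1 - lam (f i)) = (∑ i, w i) - ∑ i, w i * lam (f i) := by
      rw [← Finset.sum_sub_distrib]
      exact Finset.sum_congr rfl fun i _ => by ring
    rw [h3, hw1, ht]
  have hpos : (0:ℝ) < 1 - t := by linarith
  have hmem2 : p ∈ convexHull ℝ S := by
    have hcm : Finset.univ.centerMass (fun i => w i * (1 - lam (f i)))
        (fun i => s (f i)) = p := by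
      rw [Finset.centerMass, hwsum, ← key, smul_smul, inv_mul_cancel₀ hpos.ne', one_smul]
    rw [← hcm]
    exact (convex_convexHull ℝ S).centerMass_mem
      (fun i _ => mul_nonneg (hw0 i) (by linarith [(hlam (f i)).2]))
      (by rw [hwsum]; exact hpos)
      (fun i _ => hs (f i))
  exact hp hmem2
end
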